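/- arXiv:1812.09943 — 8 statements merged into one kernel-verified Lean document; each statement's English description precedes it below -/
import Mathlib

section
/- Let g : ℕ × ℕ → Fin 2 be defined by g(a,b) = 1 iff some value f(x) with a ≤ x < b occurs exactly once among {f(t) : a ≤ t < b}, where f : ℕ → Fin k. If H ⊆ ℕ is infinite and g is constant on pairs (x,y) ∈ H² with x < y, then g is constantly 0 on such pairs, and the minimum of H is an ERT bound for f: every color appearing at or after min H appears at least twice at or after min H. -/
/-!
If `g` were constantly `1` on an infinite `H`, pick `a ∈ H` for which the set of colours used from
`a` on is minimal. Every interval `[a, y)` with `y ∈ H` has a colour occurring exactly once in it,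
so by pigeonhole one colour does so for infinitely many `y`, hence occurs exactly once in all of
`[a, ∞)`. Restarting at a point of `H` beyond that occurrence loses this colour, contradicting
minimality. So `g` is constantly `0`; and a colour occurring only once from `min H` on would make
`g (min H) y = 1` for every larger `y ∈ H`.
-/

open Finset

section
variable {α : Type*} (f : ℕ → α)

def OccursOnceFrom (a x : ℕ) : Prop :=
  a ≤ x ∧ ∀ t, a ≤ t → f t = f x → t = x

variable {f}

theorem OccursOnceFrom.card_filter_Ico_eq_one [DecidableEq α] {a x y : ℕ}
    (h : OccursOnceFrom f a x) (hxy : x < y) :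
    ((Ico a y).filter fun t => f t = f x).card = 1 := by
  refine card_eq_one.2 ⟨x, ext fun t => ?_⟩
  simp only [mem_filter, mem_Ico, mem_singleton]
  constructor
  · rintro ⟨⟨hat, -⟩, hft⟩
    exact h.2 t hat hft
  · rintro rfl
    exact ⟨⟨h.1, hxy⟩, rfl⟩

theorem OccursOnceFrom.image_Ici_ssubset {a x a' : ℕ} (h : OccursOnceFrom f a x) (hxa' : x < a') :
    f '' Set.Ici a' ⊂ f '' Set.Ici a := by
  refine Set.ssubset_iff_subset_ne.2
    ⟨Set.image_mono (Set.Ici_subset_Ici.2 (h.1.trans hxa'.le)), fun heq => ?_⟩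
  obtain ⟨t, hta', hft⟩ : f x ∈ f '' Set.Ici a' := heq ▸ ⟨x, h.1, rfl⟩
  exact (hxa'.trans_le hta').ne' (h.2 t (h.1.trans (hxa'.le.trans hta')) hft)

theorem exists_occursOnceFrom [Finite α] [DecidableEq α] {a : ℕ} {Y : Set ℕ} (hY : Y.Infinite)
    (h : ∀ y ∈ Y, ∃ x, ((Ico a y).filter fun t => f t = f x).card = 1) :
    ∃ x, OccursOnceFrom f a x := by
  obtain ⟨v, hv⟩ : ∃ v, {y ∈ Y | ((Ico a y).filter fun t => f t = v).card = 1}.Infinite := by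
    by_contra! hfin
    refine hY ((Set.finite_iUnion hfin).subset fun y hy => ?_)
    obtain ⟨x, hx⟩ := h y hy
    exact Set.mem_iUnion.2 ⟨f x, hy, hx⟩
  obtain ⟨y₀, -, hy₀⟩ := hv.nonempty
  obtain ⟨x₀, hx₀⟩ := card_eq_one.1 hy₀
  have hx₀mem : x₀ ∈ (Ico a y₀).filter fun t => f t = v := hx₀ ▸ mem_singleton_self x₀
  simp only [mem_filter, mem_Ico] at hx₀mem
  obtain ⟨⟨hax₀, -⟩, hfx₀⟩ := hx₀mem
  refine ⟨x₀, hax₀, fun t hat hft => ?_⟩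
  obtain ⟨y, ⟨-, hy⟩, hty⟩ := hv.exists_gt (max t x₀)
  refine card_le_one.1 hy.le t ?_ x₀ ?_ <;> simp only [mem_filter, mem_Ico]
  · exact ⟨⟨hat, (le_max_left t x₀).trans_lt hty⟩, hft.trans hfx₀⟩
  · exact ⟨⟨hax₀, (le_max_right t x₀).trans_lt hty⟩, hfx₀⟩

theorem not_forall_exists_card_filter_Ico_eq_one [Finite α] [DecidableEq α] {H : Set ℕ}
    (hH : H.Infinite) :
    ¬ ∀ a ∈ H, ∀ y ∈ H, a < y → ∃ x, a ≤ x ∧ x < y ∧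
      ((Ico a y).filter fun t => f t = f x).card = 1 := by
  intro h
  obtain ⟨a, haH, hmin⟩ :=
    exists_minimalFor_of_wellFoundedLT (· ∈ H) (fun a => f '' Set.Ici a) hH.nonempty
  obtain ⟨x, hx⟩ := exists_occursOnceFrom (hH.sdiff (Set.finite_Iic a)) fun y hy =>
    (h a haH y hy.1 (not_le.1 hy.2)).imp fun _ => And.right ∘ And.right
  obtain ⟨a', ha'H, hxa'⟩ := hH.exists_gt x
  have hlt := hx.image_Ici_ssubset hxa'
  exact hlt.not_subset (hmin ha'H hlt.subset)

end

/-- Key lemma in deriving ERT from stable Ramsey's theorem for pairs: if `g`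
is the coloring of pairs recording whether some value occurs exactly once in
the interval, and `H` is an infinite set homogeneous for `g`, then `g` is
constantly `0` on pairs from `H`, and `min H` is an ERT bound for `f`. -/
theorem srt_ert_lemma (k : ℕ) (f : ℕ → Fin k) (g : ℕ → ℕ → Fin 2)
    (hg : ∀ a b : ℕ, g a b = 1 ↔
      ∃ x, a ≤ x ∧ x < b ∧ ((Finset.Ico a b).filter fun t => f t = f x).card = 1)
    (H : Set ℕ) (hH : H.Infinite)
    (hhom : ∃ c : Fin 2, ∀ x ∈ H, ∀ y ∈ H, x < y → g x y = c) :
    (∀ x ∈ H, ∀ y ∈ H, x < y → g x y = 0) ∧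
    (∀ c : Fin k, (∃ x ≥ sInf H, f x = c) →
      ∃ x y : ℕ, sInf H ≤ x ∧ sInf H ≤ y ∧ x ≠ y ∧ f x = c ∧ f y = c) := by
  obtain ⟨c, hc⟩ := hhom
  obtain rfl : c = 0 := by
    by_contra hc0
    obtain rfl : c = 1 := by omega
    exact not_forall_exists_card_filter_Ico_eq_one hH fun a ha y hy hay =>
      (hg a y).1 (hc a ha y hy hay)
  refine ⟨hc, fun c ⟨x, hx, hfx⟩ => ?_⟩
  by_contra! hcon
  have honce : OccursOnceFrom f (sInf H) x :=
    ⟨hx, fun t ht hft => by_contra fun hne => hcon x t hx ht (Ne.symm hne) hfx (hft.trans hfx)⟩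
  obtain ⟨y, hyH, hxy⟩ := hH.exists_gt x
  have hg1 : g (sInf H) y = 1 := (hg _ _).2 ⟨x, hx, hxy, honce.card_filter_Ico_eq_one hxy⟩
  have hg0 := hc _ (Nat.sInf_mem hH.nonempty) y hyH (hx.trans_lt hxy)
  exact absurd (hg1.symm.trans hg0) (by decide)
end

section
/- For f : ℕ → Fin k, the pair-coloring g(a,b) = 1 iff some value f(x) with a ≤ x < b occurs exactly once in {f(t) : a ≤ t < b}, and g(a,b) = 0 otherwise, is stable: for every a, g(a,b) is eventually constant as b → ∞. -/
/-!
For each colour `v`, the number of `t ∈ [a, b)` with `f t = v` is monotone in `b`, so whether it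
equals `1` is eventually constant in `b`. Since there are only finitely many colours, whether some
colour occurs exactly once in `[a, b)`, which is exactly `g a b = 1`, is eventually constant too.
-/

open Filter Finset

theorem Monotone.eventuallyConst_eq {α β : Type*} [Preorder α] [PartialOrder β] {u : α → β}
    (hu : Monotone u) (n : β) : EventuallyConst (fun b => u b = n) atTop := by
  rw [eventuallyConst_pred]
  by_cases hexceeds : ∃ b₀, ¬ u b₀ ≤ n
  · obtain ⟨b₀, hb₀⟩ := hexceeds
    refine .inr ((eventually_ge_atTop b₀).mono fun b hb hbn => hb₀ ?_)
    exact hbn ▸ hu hb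
  push Not at hexceeds
  by_cases hattains : ∃ b₀, u b₀ = n
  · obtain ⟨b₀, hb₀⟩ := hattains
    exact .inl ((eventually_ge_atTop b₀).mono fun b hb =>
      le_antisymm (hexceeds b) (hb₀ ▸ hu hb))
  · push Not at hattains
    exact .inr (.of_forall hattains)

theorem Filter.EventuallyConst.exists {α ι : Type*} [Finite ι] {l : Filter α} {p : ι → α → Prop}
    (hp : ∀ i, EventuallyConst (p i) l) : EventuallyConst (fun x => ∃ i, p i x) l := by
  choose c hc using fun i => (hp i).eventuallyEq_const
  refine (EventuallyConst.const (∃ i, c i)).congr ?_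
  filter_upwards [eventually_all.2 hc] with x hx
  simp only [hx]

theorem monotone_card_filter_Ico (p : ℕ → Prop) [DecidablePred p] (a : ℕ) :
    Monotone fun b => #{t ∈ Ico a b | p t} :=
  fun _ _ hb => card_le_card (filter_subset_filter _ (Ico_subset_Ico_right hb))

theorem exists_mem_card_fiber_eq_one_iff {α β : Type*} [DecidableEq β] (s : Finset α)
    (f : α → β) : (∃ x ∈ s, #{t ∈ s | f t = f x} = 1) ↔ ∃ v, #{t ∈ s | f t = v} = 1 := by
  refine ⟨fun ⟨x, _, hx⟩ => ⟨f x, hx⟩, fun ⟨v, hv⟩ => ?_⟩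
  obtain ⟨x, hx⟩ := card_eq_one.mp hv
  have hxv : x ∈ s ∧ f x = v := mem_filter.mp (hx ▸ mem_singleton_self x)
  exact ⟨x, hxv.1, hxv.2 ▸ hv⟩

/-- The pair-coloring `g(a,b) = 1` iff some value `f x` with `a ≤ x < b`
occurs exactly once in `{f t : a ≤ t < b}` is stable: for every `a`,
`g a b` is eventually constant as `b → ∞`. -/
theorem pair_coloring_stable (k : ℕ) (f : ℕ → Fin k) (g : ℕ → ℕ → Fin 2)
    (hg : ∀ a b : ℕ, (g a b = 1 ↔
        ∃ x, a ≤ x ∧ x < b ∧ ((Finset.Ico a b).filter fun t => f t = f x).card = 1) ∧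
      (g a b ≠ 1 → g a b = 0)) :
    ∀ a : ℕ, ∃ c : Fin 2, ∃ N : ℕ, ∀ b ≥ N, g a b = c := by
  intro a
  have hg_one : ∀ b, g a b = 1 ↔ ∃ v, #{t ∈ Ico a b | f t = v} = 1 := by
    intro b
    rw [(hg a b).1, ← exists_mem_card_fiber_eq_one_iff]
    simp only [mem_Ico, and_assoc]
  have hconst : EventuallyConst (fun b => g a b = 1) atTop := by
    simp only [hg_one]
    exact EventuallyConst.exists fun v =>
      (monotone_card_filter_Ico (f · = v) a).eventuallyConst_eq 1
  obtain ⟨N, hN⟩ := eventuallyConst_atTop.mp hconst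
  refine ⟨g a N, N, fun b hb => ?_⟩
  have hiff : g a b = 1 ↔ g a N = 1 := (hN b hb).to_iff
  omega
end

section
/- LPO* is Weihrauch reducible to ERT: given k functions f_0,…,f_{k−1} : ℕ → ℕ, the coloring g : ℕ → Fin (k+1) defined by g(nk+i) = i if f_i(n) = 0 and f_i(m) ≠ 0 for all m < n, and g(nk+i) = k otherwise, has the property that each color i < k appears at most once in the range of g, so any ERT bound b for g bounds the first zero (if any) of each f_i, and hence uniformly decides each LPO instance. -/
/-!
Writing positions as `n * k + i`, the colour `i < k` is placed only at the position coding the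
*first* zero of `fs i`, so it occurs at most once. A colour occurring exactly once cannot occur
beyond an ERT bound `b`, since there every colour repeats; hence each first zero is coded below
`b`, and `fs i` has a zero iff colour `i` occurs below `b`.
-/

def IsFirstZero (f : ℕ → ℕ) (n : ℕ) : Prop :=
  f n = 0 ∧ ∀ m < n, f m ≠ 0

theorem IsFirstZero.unique {f : ℕ → ℕ} {n m : ℕ} (hn : IsFirstZero f n) (hm : IsFirstZero f m) :
    n = m :=
  le_antisymm (not_lt.1 fun h => hn.2 m h hm.1) (not_lt.1 fun h => hm.2 n h hn.1)

theorem exists_isFirstZero {f : ℕ → ℕ} (h : ∃ n, f n = 0) : ∃ n, IsFirstZero f n :=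
  ⟨Nat.find h, Nat.find_spec h, fun _ hm => Nat.find_min h hm⟩

theorem lt_of_forall_eq_of_repeats_beyond {α : Type*} {g : ℕ → α} {b x : ℕ}
    (hb : ∀ x ≥ b, ∃ y ≥ b, y ≠ x ∧ g x = g y) (hx : ∀ y, g y = g x → y = x) : x < b := by
  by_contra! hbx
  obtain ⟨y, -, hyx, hgxy⟩ := hb x hbx
  exact hyx (hx y hgxy.symm)

section FirstZeroColoring

variable {k : ℕ} {fs : Fin k → ℕ → ℕ} {g : ℕ → Fin (k + 1)}
  (hg : ∀ (n : ℕ) (i : Fin k),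
    g (n * k + i.val) =
      if fs i n = 0 ∧ ∀ m < n, fs i m ≠ 0 then i.castSucc else Fin.last k)
include hg

theorem color_eq_castSucc_of_isFirstZero {i : Fin k} {n : ℕ} (h : IsFirstZero (fs i) n) :
    g (n * k + i.val) = i.castSucc := by
  rw [hg n i]
  exact if_pos h

theorem isFirstZero_of_color_eq_castSucc {i : Fin k} {x : ℕ} (hx : g x = i.castSucc) :
    IsFirstZero (fs i) (x / k) ∧ x = x / k * k + i.val := by
  have hgx := hg (x / k) ⟨x % k, Nat.mod_lt x i.pos⟩
  rw [show x / k * k + x % k = x from Nat.div_add_mod' x k, hx] at hgx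
  split_ifs at hgx with hfirst
  · have hi : i = ⟨x % k, _⟩ := Fin.castSucc_inj.1 hgx
    rw [hi]
    exact ⟨hfirst, (Nat.div_add_mod' x k).symm⟩
  · exact absurd hgx (Fin.castSucc_ne_last i)

theorem color_eq_castSucc_unique {i : Fin k} {x y : ℕ} (hx : g x = i.castSucc)
    (hy : g y = i.castSucc) : x = y := by
  obtain ⟨hx₀, hx⟩ := isFirstZero_of_color_eq_castSucc hg hx
  obtain ⟨hy₀, hy⟩ := isFirstZero_of_color_eq_castSucc hg hy
  rw [hx, hy, hx₀.unique hy₀]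

variable {b : ℕ} (hb : ∀ x ≥ b, ∃ y ≥ b, y ≠ x ∧ g x = g y)
include hb

theorem code_lt_of_isFirstZero {i : Fin k} {n : ℕ} (h : IsFirstZero (fs i) n) :
    n * k + i.val < b := by
  have hcol := color_eq_castSucc_of_isFirstZero hg h
  exact lt_of_forall_eq_of_repeats_beyond hb fun y hy =>
    color_eq_castSucc_unique hg (hy.trans hcol) hcol

theorem exists_zero_iff_exists_lt_color_eq (i : Fin k) :
    (∃ n, fs i n = 0) ↔ ∃ j < b, g j = i.castSucc := by
  constructor
  · intro hzero
    obtain ⟨n, hn⟩ := exists_isFirstZero hzero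
    exact ⟨_, code_lt_of_isFirstZero hg hb hn, color_eq_castSucc_of_isFirstZero hg hn⟩
  · rintro ⟨j, -, hj⟩
    exact ⟨_, (isFirstZero_of_color_eq_castSucc hg hj).1.1⟩

end FirstZeroColoring

theorem lpo_star_red_ert_general (k : ℕ) (fs : Fin k → ℕ → ℕ)
    (g : ℕ → Fin (k + 1))
    (hg : ∀ (n : ℕ) (i : Fin k),
      g (n * k + i.val) =
        if fs i n = 0 ∧ ∀ m < n, fs i m ≠ 0 then i.castSucc else Fin.last k) :
    (∀ i : Fin k, ∀ x y : ℕ, g x = i.castSucc → g y = i.castSucc → x = y) ∧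
    (∀ b : ℕ, (∀ x ≥ b, ∃ y ≥ b, y ≠ x ∧ g x = g y) →
      (∀ (i : Fin k) (n : ℕ), fs i n = 0 → (∀ m < n, fs i m ≠ 0) →
        n * k + i.val < b) ∧
      (∀ i : Fin k, (∃ n, fs i n = 0) ↔ ∃ j < b, g j = i.castSucc)) :=
  ⟨fun _ _ _ => color_eq_castSucc_unique hg,
    fun _ hb => ⟨fun _ _ h₀ hmin => code_lt_of_isFirstZero hg hb ⟨h₀, hmin⟩,
      exists_zero_iff_exists_lt_color_eq hg hb⟩⟩

/-- LPO* is Weihrauch reducible to ERT: given `k` LPO instances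
`fs 0, …, fs (k-1)`, the coloring `g : ℕ → Fin (k+1)` with
`g (n*k+i) = i` iff `fs i n = 0` first happens at `n` (and `= k` otherwise)
has each color `i < k` appearing at most once, any ERT bound `b` for `g`
bounds the position coding the first zero of each `fs i`, and hence decides
each LPO instance. -/
theorem lpo_star_red_ert (k : ℕ) (hk : 0 < k) (fs : Fin k → ℕ → ℕ)
    (g : ℕ → Fin (k + 1))
    (hg : ∀ (n : ℕ) (i : Fin k),
      g (n * k + i.val) =
        if fs i n = 0 ∧ ∀ m < n, fs i m ≠ 0 then i.castSucc else Fin.last k) :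
    (∀ i : Fin k, ∀ x y : ℕ, g x = i.castSucc → g y = i.castSucc → x = y) ∧
    (∀ b : ℕ, (∀ x ≥ b, ∃ y ≥ b, y ≠ x ∧ g x = g y) →
      (∀ (i : Fin k) (n : ℕ), fs i n = 0 → (∀ m < n, fs i m ≠ 0) →
        n * k + i.val < b) ∧
      (∀ i : Fin k, (∃ n, fs i n = 0) ↔ ∃ j < b, g j = i.castSucc)) :=
  lpo_star_red_ert_general k fs g hg
end

section
/- ECT is Weihrauch reducible to TC_ℕ*: given f : ℕ → Fin k, for each color i < k one can uniformly compute an enumeration of the complement of A_i = {n | ∀ m ≥ n, f(m) ≠ i}, and if b_i is any number with b_i ∈ A_i whenever A_i ≠ ∅, then b = 1 + max_i b_i satisfies: every color appearing in f at or after b appears infinitely often. -/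
/-!
Colour `i` occurs at or after `n` iff some `m ≥ n` has `f m = i`, a Σ₁ condition on `f`, so the
complement of `A i` is enumerated by searching over pairs `(n, m)`; each output reads a single value
of `f`, which makes the enumeration continuous. If colour `c` occurs only finitely often then `A c`
is nonempty, so `bs c ∈ A c`, and no occurrence of `c` lies at or beyond `1 + max_i bs i`.
-/

open Filter

section OccursFrom

variable {α : Type*} [DecidableEq α]

/-- Stage `s = ⟨n, m⟩` enumerates `n` (as the output `n + 1`, with `0` meaning "nothing") when the
witness `m ≥ n` shows that `i` occurs at or after `n`. -/
def enumOccursFrom (f : ℕ → α) (i : α) (s : ℕ) : ℕ :=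
  if s.unpair.1 ≤ s.unpair.2 ∧ f s.unpair.2 = i then s.unpair.1 + 1 else 0

theorem continuous_enumOccursFrom [TopologicalSpace α] [DiscreteTopology α] :
    Continuous (enumOccursFrom (α := α)) := by
  refine continuous_pi fun i => continuous_pi fun s => ?_
  exact (continuous_of_discreteTopology
    (f := fun a : α => if s.unpair.1 ≤ s.unpair.2 ∧ a = i then s.unpair.1 + 1 else 0)).comp
    (continuous_apply s.unpair.2)

theorem exists_enumOccursFrom_eq_succ_iff (f : ℕ → α) (i : α) (n : ℕ) :
    (∃ s, enumOccursFrom f i s = n + 1) ↔ ∃ m ≥ n, f m = i := by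
  constructor
  · rintro ⟨s, hs⟩
    unfold enumOccursFrom at hs
    split_ifs at hs with h
    · exact ⟨s.unpair.2, by omega, h.2⟩
  · rintro ⟨m, hm, hfm⟩
    exact ⟨Nat.pair n m, by simp [enumOccursFrom, hm, hfm]⟩

end OccursFrom

theorem exists_forall_ge_ne_of_finite {α : Type*} {f : ℕ → α} {c : α}
    (h : {x | f x = c}.Finite) : ∃ n, ∀ m ≥ n, f m ≠ c := by
  rw [← Set.not_infinite, ← Nat.frequently_atTop_iff_infinite, not_frequently] at h
  exact eventually_atTop.mp h

/-- ECT is Weihrauch reducible to TC_ℕ*: for each color `i < k` one can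
uniformly (continuously) compute an enumeration of the complement of
`A i = {n | ∀ m ≥ n, f m ≠ i}` (here `e f i s = n + 1` means that `n` is
enumerated), and if `bs i ∈ A i` whenever `A i ≠ ∅`, then
`b = 1 + max_i (bs i)` is an ECT bound: every color appearing at or after `b`
appears infinitely often. -/
theorem ect_red_tc_star (k : ℕ) :
    (∃ e : (ℕ → Fin k) → Fin k → ℕ → ℕ,
      Continuous e ∧
      ∀ (f : ℕ → Fin k) (i : Fin k) (n : ℕ),
        (∃ s : ℕ, e f i s = n + 1) ↔ n ∉ {n' | ∀ m ≥ n', f m ≠ i}) ∧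
    ∀ (f : ℕ → Fin k) (bs : Fin k → ℕ),
      (∀ i : Fin k, {n' | ∀ m ≥ n', f m ≠ i}.Nonempty →
        bs i ∈ {n' | ∀ m ≥ n', f m ≠ i}) →
      ∀ c : Fin k, (∃ x ≥ 1 + Finset.univ.sup bs, f x = c) →
        {x | f x = c}.Infinite := by
  refine ⟨⟨enumOccursFrom, continuous_enumOccursFrom, fun f i n => ?_⟩, ?_⟩
  · simpa using exists_enumOccursFrom_eq_succ_iff f i n
  · rintro f bs hbs c ⟨x, hx, hfx⟩ hfin
    have hbc : bs c ≤ Finset.univ.sup bs := Finset.le_sup (Finset.mem_univ c)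
    exact hbs c (exists_forall_ge_ne_of_finite hfin) x (by omega) hfx
end

section
/- TC_ℕ* is Weihrauch reducible to ECT: given enumerations e_1,…,e_{k−1} of complements of sets A_1,…,A_{k−1} ⊆ ℕ, define c : ℕ → Fin k by c(⟨s,i⟩) = i (for i ≠ 0) iff e_i(s) = min{n | ∀ t < s, e_i(t) ≠ n}, and c = 0 otherwise; then from any ECT bound b for c one can compute, for each i, a number which is in A_i whenever A_i is nonempty. -/
/-!
Let `M t` be the least number not enumerated into the complement of `A i` before stage `t`.
`M` is monotone, bounded by any element of `A i`, and it strictly increases at every stage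
of colour `i`, i.e. whenever `e i` enumerates `M t` itself. So if `A i` is nonempty, colour `i`
occurs only finitely often. If `M s` were outside `A i`, the first stage enumerating it would be
a stage of colour `i` at a position `≥ b`, and the ECT bound would then force colour `i` to recur
forever.
-/

noncomputable def leastUnenumerated (f : ℕ → ℕ) (t : ℕ) : ℕ := sInf {n | ∀ t' < t, f t' ≠ n + 1}

namespace leastUnenumerated

variable {f : ℕ → ℕ}

theorem nonempty_setOf (f : ℕ → ℕ) (t : ℕ) : {n | ∀ t' < t, f t' ≠ n + 1}.Nonempty := by
  refine ⟨∑ t' ∈ Finset.range t, f t', fun t' ht' heq => ?_⟩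
  have : f t' ≤ ∑ t' ∈ Finset.range t, f t' :=
    Finset.single_le_sum (fun _ _ => Nat.zero_le _) (Finset.mem_range.mpr ht')
  omega

theorem not_enumerated {t t' : ℕ} (ht' : t' < t) : f t' ≠ leastUnenumerated f t + 1 :=
  Nat.sInf_mem (nonempty_setOf f t) t' ht'

theorem le_of_forall_ne {t n : ℕ} (h : ∀ t' < t, f t' ≠ n + 1) : leastUnenumerated f t ≤ n :=
  Nat.sInf_le h

theorem monotone : Monotone (leastUnenumerated f) := fun _ _ htt' =>
  le_of_forall_ne fun _ ht' => not_enumerated (ht'.trans_le htt')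

theorem lt_succ_of_eq {t : ℕ} (h : f t = leastUnenumerated f t + 1) :
    leastUnenumerated f t < leastUnenumerated f (t + 1) :=
  (monotone t.le_succ).lt_of_ne fun heq => not_enumerated t.lt_succ_self (heq ▸ h)

theorem strictMonoOn : StrictMonoOn (leastUnenumerated f) {t | f t = leastUnenumerated f t + 1} :=
  fun _ ht _ _ htt' => (lt_succ_of_eq ht).trans_le (monotone htt')

theorem finite_setOf_eq {a : ℕ} (ha : ∀ t, f t ≠ a + 1) :
    {t | f t = leastUnenumerated f t + 1}.Finite := by
  refine Set.Finite.of_finite_image ((Set.finite_Iic a).subset ?_) strictMonoOn.injOn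
  rintro _ ⟨t, -, rfl⟩
  exact le_of_forall_ne fun t' _ => ha t'

/-- The first stage enumerating `leastUnenumerated f s` is one at which `f` enumerates its own
least unenumerated number. -/
theorem exists_ge_eq_of_enumerated {s s' : ℕ} (hs' : f s' = leastUnenumerated f s + 1) :
    ∃ t, s ≤ t ∧ f t = leastUnenumerated f t + 1 := by
  classical
  have hex : ∃ t, f t = leastUnenumerated f s + 1 := ⟨s', hs'⟩
  have hst : s ≤ Nat.find hex :=
    not_lt.mp fun hlt => not_enumerated hlt (Nat.find_spec hex)
  have hM : leastUnenumerated f (Nat.find hex) = leastUnenumerated f s :=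
    (le_of_forall_ne fun _ ht' => Nat.find_min hex ht').antisymm (monotone hst)
  exact ⟨Nat.find hex, hst, (Nat.find_spec hex).trans (congrArg (· + 1) hM.symm)⟩

end leastUnenumerated

theorem exists_gt_color_eq_of_ect {ι β : Type*} {pair : ℕ → ι → ℕ}
    (hpair : Function.Surjective fun p : ℕ × ι => pair p.1 p.2) {i : ι}
    (hmono : Monotone (pair · i)) {c : ℕ → β} {d : β} (hd : ∀ t j, c (pair t j) = d → j = i)
    {b : ℕ} (hb : ∀ x ≥ b, ∃ y > x, c x = c y) {t : ℕ} (hbt : b ≤ pair t i)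
    (hct : c (pair t i) = d) : ∃ t', t < t' ∧ b ≤ pair t' i ∧ c (pair t' i) = d := by
  obtain ⟨y, hy, hcy⟩ := hb _ hbt
  obtain ⟨⟨t', j⟩, rfl⟩ := hpair y
  obtain rfl : j = i := hd t' j (hcy ▸ hct)
  exact ⟨t', lt_of_not_ge fun h => (hmono h).not_gt hy, hbt.trans hy.le, hcy ▸ hct⟩

/-- TC_ℕ* is Weihrauch reducible to ECT: given enumerations `e i` of the
complements of sets `A i` (for `i ≠ 0`; here `e i s = n + 1` means that `n` is
enumerated), define `c (pair s i) = i` (for `i ≠ 0`) iff `e i` enumerates at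
stage `s` the least number not yet enumerated before stage `s`, and `c = 0`
otherwise.  Then from any ECT bound `b` for `c` one can compute, for each `i`,
a number which is in `A i` whenever `A i` is nonempty. -/
theorem tc_star_red_ect (k : ℕ) (A : Fin (k + 1) → Set ℕ) (e : Fin (k + 1) → ℕ → ℕ)
    (he : ∀ i : Fin (k + 1), i ≠ 0 → ∀ n : ℕ, n ∉ A i ↔ ∃ s : ℕ, e i s = n + 1)
    (pair : ℕ → Fin (k + 1) → ℕ)
    (hpair : Function.Bijective fun p : ℕ × Fin (k + 1) => pair p.1 p.2)
    (hmono : ∀ (s s' : ℕ) (i : Fin (k + 1)), s ≤ s' → pair s i ≤ pair s' i)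
    (c : ℕ → Fin (k + 1))
    (hc : ∀ (s : ℕ) (i : Fin (k + 1)),
      c (pair s i) =
        if i ≠ 0 ∧ e i s = sInf {n | ∀ t < s, e i t ≠ n + 1} + 1 then i else 0) :
    ∀ b : ℕ, (∀ x ≥ b, ∃ y > x, c x = c y) →
      ∀ i : Fin (k + 1), i ≠ 0 → ∀ s : ℕ, b ≤ pair s i →
        (A i).Nonempty → sInf {n | ∀ t < s, e i t ≠ n + 1} ∈ A i := by
  intro b hb i hi s hbs ⟨a, ha⟩
  have hcolor : ∀ t, c (pair t i) = i ↔ e i t = leastUnenumerated (e i) t + 1 := fun t => by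
    simp [hc, leastUnenumerated, hi, Ne.symm hi]
  have hd : ∀ t j, c (pair t j) = i → j = i := fun t j h => by
    rw [hc] at h
    split_ifs at h
    exacts [h, absurd h.symm hi]
  set S := {t | b ≤ pair t i ∧ c (pair t i) = i}
  have hfin : S.Finite := (leastUnenumerated.finite_setOf_eq fun t h =>
    (he i hi a).mpr ⟨t, h⟩ ha).subset fun t ht => (hcolor t).mp ht.2
  by_contra hMs
  obtain ⟨s', hs'⟩ := (he i hi _).mp hMs
  obtain ⟨t, hst, ht⟩ := leastUnenumerated.exists_ge_eq_of_enumerated hs'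
  obtain ⟨m, hmS, hmax⟩ := Set.exists_max_image S id hfin
    ⟨t, hbs.trans (hmono s t i hst), (hcolor t).mpr ht⟩
  obtain ⟨m', hmm', hm'S⟩ := exists_gt_color_eq_of_ect hpair.2 (fun _ _ h => hmono _ _ i h) hd
    hb hmS.1 hmS.2
  exact (hmax m' hm'S).not_gt hmm'
end

section
/- isInfinite is not Weihrauch reducible to TC_ℕ*: there are no computable functionals Φ, Ψ such that for every p : ℕ → 2, Φ(p) is a finite tuple of TC_ℕ instances and Ψ applied to any tuple of solutions together with p correctly decides whether p has infinitely many ones. -/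
/-!
Suppose `Φ`, `Ψ` witness the reduction. On a nonempty open set `V` of oracles the number `k` of
instances is constant, and after shrinking `V` once per instance, every instance `i < k` either
has a number that is never enumerated into its complement anywhere on `V`, or each number is
enumerated on a dense open subset of `V`. Answer instances of the first kind with that number and
the others with valid answers for some `p₀ ∈ V` with finitely many ones; `Ψ` rejects `p₀` with
these answers, hence rejects everything near `p₀`. By the Baire category theorem some `G` near
`p₀` has infinitely many ones and enumerates every number for each instance of the second kind,
so the same answers are valid for `G`, and `Ψ` has to accept it.
-/

open Set Topology

theorem IsOpen.exists_subset_forall_disjoint_or_subset_closure {X ι : Type*}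
    [TopologicalSpace X] (U : ι → ℕ → Set X) (s : Finset ι) {V₀ : Set X} (hV₀ : IsOpen V₀)
    (hV₀ne : V₀.Nonempty) :
    ∃ V ⊆ V₀, IsOpen V ∧ V.Nonempty ∧
      ∀ i ∈ s, (∃ n, Disjoint V (U i n)) ∨ ∀ n, V ⊆ closure (U i n) := by
  classical
  induction s using Finset.induction_on with
  | empty => exact ⟨V₀, subset_rfl, hV₀, hV₀ne, by simp⟩
  | insert i s _ ih =>
    obtain ⟨V, hVV₀, hV, hVne, hs⟩ := ih
    by_cases hi : ∀ n, V ⊆ closure (U i n)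
    · exact ⟨V, hVV₀, hV, hVne, (Finset.forall_mem_insert _ _ _).2 ⟨Or.inr hi, hs⟩⟩
    simp only [not_forall, not_subset] at hi
    obtain ⟨n, x, hxV, hx⟩ := hi
    refine ⟨V \ closure (U i n), sdiff_subset.trans hVV₀, hV.sdiff isClosed_closure,
      ⟨x, hxV, hx⟩, (Finset.forall_mem_insert _ _ _).2 ⟨Or.inl ⟨n, ?_⟩, fun j hj => ?_⟩⟩
    · exact disjoint_sdiff_left.mono_right subset_closure
    · exact (hs j hj).imp (fun ⟨m, hm⟩ => ⟨m, hm.mono_left sdiff_subset⟩)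
        (fun h m => sdiff_subset.trans (h m))

theorem IsOpen.exists_mem_forall_mem_of_subset_closure {X ι : Type*} [TopologicalSpace X]
    [BaireSpace X] [Countable ι] {V : Set X} (hV : IsOpen V) (hVne : V.Nonempty)
    {W : ι → Set X} (hW : ∀ j, IsOpen (W j)) (hVW : ∀ j, V ⊆ closure (W j)) :
    ∃ x ∈ V, ∀ j, x ∈ W j := by
  have hdense : ∀ j, Dense (W j ∪ (closure V)ᶜ) := fun j => by
    rw [dense_iff_closure_eq, closure_union, eq_univ_iff_forall]
    intro x
    by_cases hx : x ∈ closure V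
    · exact Or.inl (closure_minimal (hVW j) isClosed_closure hx)
    · exact Or.inr (subset_closure hx)
  obtain ⟨x, hxV, hx⟩ := (dense_iInter_of_isOpen
    (fun j => (hW j).union isClosed_closure.isOpen_compl) hdense).inter_open_nonempty V hV hVne
  exact ⟨x, hxV, fun j => (mem_iInter.1 hx j).resolve_right (not_not.2 (subset_closure hxV))⟩

theorem IsOpen.exists_finset_forall_mem {ι : Type*} {π : ι → Type*}
    [∀ i, TopologicalSpace (π i)] {V : Set (∀ i, π i)} (hV : IsOpen V) {p : ∀ i, π i}
    (hp : p ∈ V) : ∃ I : Finset ι, ∀ q, (∀ i ∈ I, q i = p i) → q ∈ V := by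
  obtain ⟨I, u, hu, hIV⟩ := isOpen_pi_iff.1 hV p hp
  exact ⟨I, fun q hq => hIV fun i hi => hq i hi ▸ (hu i hi).2⟩

theorem IsOpen.exists_mem_finite_ne {ι α : Type*} [TopologicalSpace α] {V : Set (ι → α)}
    (hV : IsOpen V) (hVne : V.Nonempty) (b : α) : ∃ p ∈ V, {i | p i ≠ b}.Finite := by
  classical
  obtain ⟨p, hp⟩ := hVne
  obtain ⟨I, hI⟩ := hV.exists_finset_forall_mem hp
  refine ⟨fun i => if i ∈ I then p i else b, hI _ fun i hi => if_pos hi,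
    I.finite_toSet.subset fun i hi => ?_⟩
  by_contra hiI
  exact hi (if_neg hiI)

theorem isOpen_setOf_exists_gt_eq_true (m : ℕ) : IsOpen {p : ℕ → Bool | ∃ x > m, p x = true} := by
  simp only [ofPred_exists]
  refine isOpen_iUnion fun x => isOpen_const.inter ?_
  exact (isOpen_discrete {true}).preimage (continuous_apply (A := fun _ => Bool) x)

theorem dense_setOf_exists_gt_eq_true (m : ℕ) : Dense {p : ℕ → Bool | ∃ x > m, p x = true} := by
  classical
  refine dense_iff_inter_open.2 fun V hV ⟨p, hp⟩ => ?_
  obtain ⟨I, hI⟩ := hV.exists_finset_forall_mem hp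
  obtain ⟨x, hx⟩ := (I ∪ Finset.range (m + 1)).exists_notMem
  simp only [Finset.mem_union, Finset.mem_range, not_or, not_lt] at hx
  refine ⟨Function.update p x true, hI _ fun i hi => ?_, x, hx.2, by simp⟩
  exact Function.update_of_ne (ne_of_mem_of_not_mem hi hx.1) _ _

/-- `e i` enumerates the complement of the `i`-th of `k` instances of TC_ℕ, with `e i s = n + 1`
meaning that `n` is enumerated at stage `s`. -/
def IsTCSolution (e : ℕ → ℕ → ℕ) (k : ℕ) (a : ℕ → ℕ) : Prop :=
  ∀ i < k, {n | ¬ ∃ s, e i s = n + 1}.Nonempty → a i ∈ {n | ¬ ∃ s, e i s = n + 1}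

theorem IsOpen.exists_subset_isTCSolution_of_forall_mem {X : Type*} [TopologicalSpace X]
    {e : X → ℕ → ℕ → ℕ} (he : Continuous e) (k : ℕ) {V₀ : Set X} (hV₀ : IsOpen V₀)
    (hV₀ne : V₀.Nonempty) :
    ∃ V ⊆ V₀, IsOpen V ∧ V.Nonempty ∧ ∃ W : ℕ × ℕ → Set X, (∀ j, IsOpen (W j)) ∧
      (∀ j, V ⊆ closure (W j)) ∧ ∀ p₀ ∈ V, ∃ a, IsTCSolution (e p₀) k a ∧
        ∀ p ∈ V, (∀ j, p ∈ W j) → IsTCSolution (e p) k a := by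
  classical
  set U : ℕ → ℕ → Set X := fun i n => {p | ∃ s, e p i s = n + 1}
  have hU : ∀ i n, IsOpen (U i n) := fun i n => by
    simp only [U, ofPred_exists]
    exact isOpen_iUnion fun s => (isOpen_discrete {n + 1}).preimage
      ((continuous_apply s).comp ((continuous_apply i).comp he))
  obtain ⟨V, hVV₀, hV, hVne, hVU⟩ :=
    hV₀.exists_subset_forall_disjoint_or_subset_closure U (Finset.range k) hV₀ne
  refine ⟨V, hVV₀, hV, hVne, fun j => if ∀ n, V ⊆ closure (U j.1 n) then U j.1 j.2 else univ,
    fun j => ?_, fun j => ?_, fun p₀ hp₀ => ?_⟩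
  · dsimp only
    split_ifs
    exacts [hU _ _, isOpen_univ]
  · dsimp only
    split_ifs with h
    exacts [h j.2, by simp]
  set a : ℕ → ℕ := fun i =>
    if h : ∃ n, Disjoint V (U i n) then h.choose else Classical.epsilon fun n => p₀ ∉ U i n
  have ha_of_disjoint : ∀ i, (∃ n, Disjoint V (U i n)) → ∀ p ∈ V, p ∉ U i (a i) :=
    fun i h p hp hpU => by
      simp only [a, dif_pos h] at hpU
      exact h.choose_spec.ne_of_mem hp hpU rfl
  refine ⟨a, fun i _ hne => ?_, fun p hp hpW i hi ⟨n, hn⟩ => ?_⟩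
  · by_cases h : ∃ n, Disjoint V (U i n)
    · exact ha_of_disjoint i h p₀ hp₀
    · simp only [a, dif_neg h]
      exact Classical.epsilon_spec hne
  · refine (hVU i (Finset.mem_range.2 hi)).elim (fun h => ha_of_disjoint i h p hp) fun h => ?_
    exact (hn (by simpa only [if_pos h, U, mem_ofPred_eq] using hpW (i, n))).elim

/-- `isInfinite` is not Weihrauch reducible to TC_ℕ*: there are no effective
(here: continuous) functionals `Φ`, `Ψ` such that `Φ p` is a finite tuple of
TC_ℕ instances (a number of instances together with enumerations, where
`e s = n + 1` means that `n` is enumerated into the complement) and `Ψ`,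
applied to `p` together with any tuple of TC_ℕ solutions, correctly decides
whether `p` has infinitely many ones. -/
theorem isInfinite_not_red_tc_star :
    ¬ ∃ (Φ : (ℕ → Bool) → ℕ × (ℕ → ℕ → ℕ))
        (Ψ : (ℕ → Bool) × (ℕ → ℕ) → Bool),
      Continuous Φ ∧ Continuous Ψ ∧
      ∀ (p : ℕ → Bool) (a : ℕ → ℕ),
        (∀ i < (Φ p).1,
          {n | ¬ ∃ s : ℕ, (Φ p).2 i s = n + 1}.Nonempty →
            a i ∈ {n | ¬ ∃ s : ℕ, (Φ p).2 i s = n + 1}) →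
        (Ψ (p, a) = true ↔ {n | p n = true}.Infinite) := by
  rintro ⟨Φ, Ψ, hΦ, hΨ, hcorrect⟩
  set k := (Φ fun _ => false).1
  obtain ⟨V, hVk, hV, hVne, W, hW, hVW, hsol⟩ :=
    ((isOpen_discrete {k}).preimage hΦ.fst).exists_subset_isTCSolution_of_forall_mem hΦ.snd k
      ⟨_, rfl⟩
  have hk : ∀ p ∈ V, (Φ p).1 = k := fun p hp => hVk hp
  obtain ⟨p₀, hp₀V, hp₀⟩ := hV.exists_mem_finite_ne hVne false
  simp only [ne_eq, Bool.not_eq_false] at hp₀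
  obtain ⟨a, hp₀a, ha⟩ := hsol p₀ hp₀V
  have hΨp₀ : Ψ (p₀, a) = false := Bool.eq_false_iff.2 fun h =>
    (hcorrect p₀ a (hk p₀ hp₀V ▸ hp₀a) |>.1 h) hp₀
  obtain ⟨G, ⟨hGV, hΨG⟩, hG⟩ := (hV.inter ((isOpen_discrete {false}).preimage
      (hΨ.comp (Continuous.prodMk_left a)))).exists_mem_forall_mem_of_subset_closure
    ⟨p₀, hp₀V, hΨp₀⟩ (W := Sum.elim (fun m => {p : ℕ → Bool | ∃ x > m, p x = true}) W)
    (by rintro (m | j); exacts [isOpen_setOf_exists_gt_eq_true m, hW j])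
    (by
      rintro (m | j)
      · simp [(dense_setOf_exists_gt_eq_true m).closure_eq]
      · exact inter_subset_left.trans (hVW j))
  have hGinf : {n | G n = true}.Infinite := infinite_of_forall_exists_gt fun m =>
    let ⟨x, hxm, hx⟩ := hG (Sum.inl m)
    ⟨x, hx, hxm⟩
  have hGa : IsTCSolution (Φ G).2 (Φ G).1 a := hk G hGV ▸ ha G hGV fun j => hG (Sum.inr j)
  exact Bool.false_ne_true (hΨG.symm.trans ((hcorrect G a hGa).2 hGinf))
end

section
/- LPO is not strongly Weihrauch reducible to ECT. More generally, if P : X ⇉ ℕ is a multifunction all of whose solution sets are upward closed in ℕ, and g : Y ⇉ Fin m is a multifunction admitting two inputs with disjoint solution sets, then g is not strongly Weihrauch reducible to P. -/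
/-!
A strong Weihrauch reduction must choose its answer from the solution alone. Any two instances
`Φ y₁`, `Φ y₂` of a problem with nonempty upward closed solution sets in a directed order share a
solution (any common upper bound of one solution of each), so `Ψ` of it would have to solve the
two instances `y₁`, `y₂` of `g`, which have disjoint solution sets. ECT is such a problem by the
pigeonhole principle, and LPO has the two disjoint instances "some zero" and "no zero".
-/

/-- Strong Weihrauch reducibility of `g` to `P`, with no computability required of `Φ` and `Ψ`. -/
def StronglyWeihrauchReducible {X Y ι Z : Type*} (g : Y → Set Z) (P : X → Set ι) : Prop :=
  ∃ (Φ : Y → X) (Ψ : ι → Z), ∀ (y : Y) (s : ι), s ∈ P (Φ y) → Ψ s ∈ g y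

theorem not_stronglyWeihrauchReducible_of_isUpperSet {X Y ι Z : Type*} [Preorder ι]
    [IsDirectedOrder ι] {P : X → Set ι} (hP : ∀ x, (P x).Nonempty) (hup : ∀ x, IsUpperSet (P x))
    {g : Y → Set Z} {y₁ y₂ : Y} (hg : Disjoint (g y₁) (g y₂)) :
    ¬ StronglyWeihrauchReducible g P := by
  rintro ⟨Φ, Ψ, hred⟩
  obtain ⟨a₁, ha₁⟩ := hP (Φ y₁)
  obtain ⟨a₂, ha₂⟩ := hP (Φ y₂)
  obtain ⟨s, h₁s, h₂s⟩ := exists_ge_ge a₁ a₂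
  exact Set.disjoint_left.mp hg (hred y₁ s (hup _ h₁s ha₁)) (hred y₂ s (hup _ h₂s ha₂))

/-- The solutions of the instance `f` of ECT: bounds beyond which every value of `f` recurs. -/
def ectSolutions {α : Type*} (f : ℕ → α) : Set ℕ :=
  {b | ∀ x ≥ b, ∃ y > x, f x = f y}

theorem isUpperSet_ectSolutions {α : Type*} (f : ℕ → α) : IsUpperSet (ectSolutions f) :=
  fun _ _ hab ha x hx => ha x (hab.trans hx)

theorem ectSolutions_nonempty {α : Type*} [Finite α] (f : ℕ → α) :
    (ectSolutions f).Nonempty := by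
  set S : Set ℕ := {x | ∀ y > x, f x ≠ f y}
  have hinj : S.InjOn f := by
    intro a ha b hb hab
    by_contra hne
    rcases lt_or_gt_of_ne hne with h | h
    · exact ha b h hab
    · exact hb a h hab.symm
  obtain ⟨b, hb⟩ := (Set.Finite.of_finite_image (Set.toFinite _) hinj).bddAbove
  refine ⟨b + 1, fun x hx => ?_⟩
  have hxS : x ∉ S := fun hxS => absurd (hb hxS) (by omega)
  simpa [S] using hxS

def lpoSolutions (p : ℕ → ℕ) : Set (Fin 2) :=
  {i | ((∃ n, p n = 0) → i = 0) ∧ (¬ (∃ n, p n = 0) → i = 1)}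

theorem disjoint_lpoSolutions_zero_one :
    Disjoint (lpoSolutions fun _ => 0) (lpoSolutions fun _ => 1) := by
  refine Set.disjoint_left.mpr fun i h₀ h₁ => ?_
  have hi₀ : i = 0 := h₀.1 ⟨0, rfl⟩
  have hi₁ : i = 1 := h₁.2 (by simp)
  exact absurd (hi₀.symm.trans hi₁) (by decide)

/-- LPO is not strongly Weihrauch reducible to ECT; more generally, no
multifunction `P : X ⇉ ℕ` that is total and has upward closed solution sets
strongly Weihrauch-computes a multifunction `g : Y ⇉ Fin m` admitting two
inputs with (nonempty) disjoint solution sets. -/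
theorem lpo_not_sred_ect :
    (¬ ∃ (Φ : (ℕ → ℕ) → Σ k : ℕ, ℕ → Fin k) (Ψ : ℕ → Fin 2),
      ∀ (p : ℕ → ℕ) (b : ℕ),
        (∀ x ≥ b, ∃ y > x, (Φ p).2 x = (Φ p).2 y) →
          (((∃ n, p n = 0) → Ψ b = 0) ∧ (¬ (∃ n, p n = 0) → Ψ b = 1))) ∧
    ∀ {X Y : Type*} (P : X → Set ℕ) (m : ℕ) (g : Y → Set (Fin m)),
      (∀ x, (P x).Nonempty) →
      (∀ (x : X) (a b : ℕ), a ∈ P x → a ≤ b → b ∈ P x) →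
      (∃ y₁ y₂ : Y, (g y₁).Nonempty ∧ (g y₂).Nonempty ∧ Disjoint (g y₁) (g y₂)) →
      ¬ ∃ (Φ : Y → X) (Ψ : ℕ → Fin m), ∀ (y : Y) (s : ℕ), s ∈ P (Φ y) → Ψ s ∈ g y := by
  constructor
  · exact not_stronglyWeihrauchReducible_of_isUpperSet (P := fun f : Σ k, ℕ → Fin k ↦
      ectSolutions f.2) (fun f ↦ ectSolutions_nonempty f.2) (fun f ↦ isUpperSet_ectSolutions f.2)
      disjoint_lpoSolutions_zero_one
  · rintro X Y P m g hP hup ⟨y₁, y₂, -, -, hg⟩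
    exact not_stronglyWeihrauchReducible_of_isUpperSet hP
      (fun x _ _ hab ha ↦ hup x _ _ ha hab) hg
end

section
/- minECT × minECT is Weihrauch reducible to minECT: given two colorings p : ℕ → Fin k, q : ℕ → Fin l, each having at least one color occurring only finitely often, the coloring r(⟨n,m⟩) = ⟨p(n), q(m)⟩ (via a bijective monotone pairing) has the property that the last occurrence of ⟨c₀,c₁⟩ in r is at ⟨n₀,n₁⟩ iff n₀ is the last occurrence of c₀ in p and n₁ is the last occurrence of c₁ in q; hence the minimal ECT bounds for p and q are computable from the minimal ECT bound for r. -/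
/-!
Call a position a last occurrence when its color never recurs later. Distinct last occurrences
carry distinct colors, so a coloring with finitely many colors has finitely many of them, and at
least one when some color occurs finitely often; the minimal ECT bound is then one more than the
greatest last occurrence. For the product coloring, a later position `⟨a, b⟩` with the color of
`⟨n, m⟩` must have `a > n` or `b > m` by monotonicity of the pairing, and repeats the color of `n`
in `p` and of `m` in `q`. Hence `⟨n, m⟩` is a last occurrence of `r` exactly when `n` and `m` are
last occurrences of `p` and `q`, and the greatest last occurrence of `r` pairs those of `p` and `q`.
-/

open Function

section LastOccurrence

variable {α : Type*}

def IsLastOccurrence (f : ℕ → α) (n : ℕ) : Prop := ∀ m > n, f n ≠ f m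

def IsECTBound (f : ℕ → α) (b : ℕ) : Prop := ∀ x ≥ b, ∃ y > x, f x = f y

def IsMinECTBound (f : ℕ → α) (b : ℕ) : Prop :=
  IsECTBound f b ∧ ∀ b' < b, ¬ IsECTBound f b'

theorem IsMinECTBound.unique {f : ℕ → α} {a b : ℕ} (ha : IsMinECTBound f a)
    (hb : IsMinECTBound f b) : a = b :=
  le_antisymm (not_lt.1 fun h => ha.2 b h hb.1) (not_lt.1 fun h => hb.2 a h ha.1)

theorem eq_and_isLastOccurrence_iff {f : ℕ → α} {n : ℕ} {c : α} :
    (f n = c ∧ IsLastOccurrence f n) ↔ (f n = c ∧ ∀ m > n, f m ≠ c) :=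
  and_congr_right fun h => by subst h; simp only [IsLastOccurrence, ne_comm]

theorem isMinECTBound_succ_of_isGreatest {f : ℕ → α} {n : ℕ}
    (h : IsGreatest {x | IsLastOccurrence f x} n) : IsMinECTBound f (n + 1) := by
  refine ⟨fun x hx => ?_, fun b hb hbound => ?_⟩
  · by_contra hrec
    have : x ≤ n := h.2 fun y hy hxy => hrec ⟨y, hy, hxy⟩
    omega
  · obtain ⟨y, hy, hny⟩ := hbound n (by omega)
    exact h.1 y hy hny

theorem injOn_isLastOccurrence (f : ℕ → α) : Set.InjOn f {x | IsLastOccurrence f x} := by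
  intro x hx y hy hxy
  rcases lt_trichotomy x y with h | h | h
  · exact absurd hxy (hx y h)
  · exact h
  · exact absurd hxy.symm (hy x h)

theorem exists_isLastOccurrence {f : ℕ → α}
    (h : ∃ c, (∃ n, f n = c) ∧ {n | f n = c}.Finite) : ∃ n, IsLastOccurrence f n := by
  obtain ⟨c, hne, hfin⟩ := h
  obtain ⟨n, hn, hmax⟩ := hfin.bddAbove.exists_isGreatest_of_nonempty hne
  refine ⟨n, fun m hm hnm => ?_⟩
  have : m ≤ n := hmax (show f m = c from hnm ▸ hn)
  omega

theorem exists_isGreatest_isLastOccurrence [Finite α] {f : ℕ → α}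
    (h : ∃ n, IsLastOccurrence f n) : ∃ n, IsGreatest {x | IsLastOccurrence f x} n :=
  (Set.toFinite _ |>.of_finite_image (injOn_isLastOccurrence f)).bddAbove
    |>.exists_isGreatest_of_nonempty h

end LastOccurrence

section Product

variable {α β γ : Type*} {p : ℕ → α} {q : ℕ → β} {r : ℕ → γ} {pair : ℕ → ℕ → ℕ}
  {pairC : α → β → γ}

theorem pair_lt_pair (hinj : Injective fun x : ℕ × ℕ => pair x.1 x.2)
    (hmono : ∀ a a' b b' : ℕ, a ≤ a' → b ≤ b' → pair a b ≤ pair a' b') {a a' b b' : ℕ}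
    (ha : a ≤ a') (hb : b ≤ b') (hne : (a, b) ≠ (a', b')) : pair a b < pair a' b' :=
  (hmono a a' b b' ha hb).lt_of_ne fun h => hne (hinj h)

theorem isLastOccurrence_pair_iff (hpair : Bijective fun x : ℕ × ℕ => pair x.1 x.2)
    (hmono : ∀ a a' b b' : ℕ, a ≤ a' → b ≤ b' → pair a b ≤ pair a' b')
    (hpairC : Injective fun x : α × β => pairC x.1 x.2)
    (hr : ∀ n m : ℕ, r (pair n m) = pairC (p n) (q m)) {n m : ℕ} :
    IsLastOccurrence r (pair n m) ↔ IsLastOccurrence p n ∧ IsLastOccurrence q m := by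
  constructor
  · intro h
    refine ⟨fun a ha hpa => h _ (pair_lt_pair hpair.1 hmono ha.le le_rfl (by simp [ha.ne])) ?_,
      fun b hb hqb => h _ (pair_lt_pair hpair.1 hmono le_rfl hb.le (by simp [hb.ne])) ?_⟩
    · rw [hr, hr, hpa]
    · rw [hr, hr, hqb]
  · rintro ⟨hp, hq⟩ y hy hry
    obtain ⟨⟨a, b⟩, rfl⟩ := hpair.2 y
    obtain ⟨hpa, hqb⟩ : p n = p a ∧ q m = q b := by
      rw [hr, hr] at hry
      exact Prod.mk_inj.1 (hpairC hry)
    have ha : a ≤ n := not_lt.1 fun ha => hp a ha hpa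
    have hb : b ≤ m := not_lt.1 fun hb => hq b hb hqb
    exact (hmono a n b m ha hb).not_gt hy

theorem isGreatest_isLastOccurrence_pair (hpair : Bijective fun x : ℕ × ℕ => pair x.1 x.2)
    (hmono : ∀ a a' b b' : ℕ, a ≤ a' → b ≤ b' → pair a b ≤ pair a' b')
    (hpairC : Injective fun x : α × β => pairC x.1 x.2)
    (hr : ∀ n m : ℕ, r (pair n m) = pairC (p n) (q m)) {n m : ℕ}
    (hn : IsGreatest {x | IsLastOccurrence p x} n)
    (hm : IsGreatest {x | IsLastOccurrence q x} m) :
    IsGreatest {x | IsLastOccurrence r x} (pair n m) := by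
  refine ⟨(isLastOccurrence_pair_iff hpair hmono hpairC hr).2 ⟨hn.1, hm.1⟩, fun y hy => ?_⟩
  obtain ⟨⟨a, b⟩, rfl⟩ := hpair.2 y
  obtain ⟨ha, hb⟩ := (isLastOccurrence_pair_iff hpair hmono hpairC hr).1 hy
  exact hmono a n b m (hn.2 ha) (hm.2 hb)

end Product

/-- minECT × minECT ≤_W minECT: given colorings `p`, `q`, each with a color
occurring only finitely often, the product coloring
`r (pair n m) = pairC (p n) (q m)` (via bijective monotone pairings) has the
property that last occurrences in `r` correspond exactly to pairs of last
occurrences in `p` and `q`; hence the minimal ECT bounds for `p` and `q` are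
computable from the minimal ECT bound for `r`. -/
theorem min_ect_idempotent (k l : ℕ) (p : ℕ → Fin k) (q : ℕ → Fin l)
    (hp : ∃ c : Fin k, (∃ n, p n = c) ∧ Set.Finite {n | p n = c})
    (hq : ∃ c : Fin l, (∃ n, q n = c) ∧ Set.Finite {n | q n = c})
    (pair : ℕ → ℕ → ℕ)
    (hpair : Function.Bijective fun x : ℕ × ℕ => pair x.1 x.2)
    (hmono : ∀ a a' b b' : ℕ, a ≤ a' → b ≤ b' → pair a b ≤ pair a' b')
    (pairC : Fin k → Fin l → Fin (k * l))
    (hpairC : Function.Bijective fun x : Fin k × Fin l => pairC x.1 x.2)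
    (r : ℕ → Fin (k * l)) (hr : ∀ n m : ℕ, r (pair n m) = pairC (p n) (q m)) :
    (∀ (c₀ : Fin k) (c₁ : Fin l) (n₀ n₁ : ℕ),
      (r (pair n₀ n₁) = pairC c₀ c₁ ∧ ∀ m > pair n₀ n₁, r m ≠ pairC c₀ c₁) ↔
        ((p n₀ = c₀ ∧ ∀ m > n₀, p m ≠ c₀) ∧ (q n₁ = c₁ ∧ ∀ m > n₁, q m ≠ c₁))) ∧
    (∀ br : ℕ,
      ((∀ x ≥ br, ∃ y > x, r x = r y) ∧
        ∀ b' < br, ¬ ∀ x ≥ b', ∃ y > x, r x = r y) →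
      ∃ n₀ n₁ : ℕ, br = pair n₀ n₁ + 1 ∧
        ((∀ x ≥ n₀ + 1, ∃ y > x, p x = p y) ∧
          ∀ b' < n₀ + 1, ¬ ∀ x ≥ b', ∃ y > x, p x = p y) ∧
        ((∀ x ≥ n₁ + 1, ∃ y > x, q x = q y) ∧
          ∀ b' < n₁ + 1, ¬ ∀ x ≥ b', ∃ y > x, q x = q y)) := by
  have hpairC_eq {a c : Fin k} {b d : Fin l} : pairC a b = pairC c d ↔ a = c ∧ b = d :=
    hpairC.1.eq_iff.trans Prod.mk_inj
  refine ⟨fun c₀ c₁ n₀ n₁ => ?_, fun br hbr => ?_⟩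
  · rw [← eq_and_isLastOccurrence_iff, ← eq_and_isLastOccurrence_iff,
      ← eq_and_isLastOccurrence_iff, isLastOccurrence_pair_iff hpair hmono hpairC.1 hr, hr,
      hpairC_eq, and_and_and_comm]
  · obtain ⟨n₀, hn₀⟩ := exists_isGreatest_isLastOccurrence (exists_isLastOccurrence hp)
    obtain ⟨n₁, hn₁⟩ := exists_isGreatest_isLastOccurrence (exists_isLastOccurrence hq)
    have hpair_greatest := isGreatest_isLastOccurrence_pair hpair hmono hpairC.1 hr hn₀ hn₁
    exact ⟨n₀, n₁, IsMinECTBound.unique hbr (isMinECTBound_succ_of_isGreatest hpair_greatest),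
      isMinECTBound_succ_of_isGreatest hn₀, isMinECTBound_succ_of_isGreatest hn₁⟩
end
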